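/- Let m ≥ 1, and let 2^{j_1},…,2^{j_s} and 2^{k_1},…,2^{k_t} be two finite lists of powers of 2, each at most m, such that the two lists have the same sum (2^{j_1}+⋯+2^{j_s} = 2^{k_1}+⋯+2^{k_t}) and the same underlying set of values ({2^{j_1},…,2^{j_s}} = {2^{k_1},…,2^{k_t}} as sets). Let e_d ∈ F_2[t_1,…,t_m] denote the d-th elementary symmetric polynomial in t_1,…,t_m. Then e_{2^{j_1}} ⋯ e_{2^{j_s}} − e_{2^{k_1}} ⋯ e_{2^{k_t}} belongs to the ideal J_m. (This is the universal relation (*) among Stiefel–Whitney classes of 2-power degree modulo the canonical ideal.) -/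

import Mathlib

open MvPolynomial

/-- `J m` is the ideal of `F₂[t 1, …, t m]` generated by the elements
`t i ^ 2 * t j + t i * t j ^ 2` for `1 ≤ i, j ≤ m`. -/
noncomputable def J (m : ℕ) : Ideal (MvPolynomial (Fin m) (ZMod 2)) :=
  Ideal.span {p | ∃ i j : Fin m, p = X i ^ 2 * X j + X i * X j ^ 2}

/-!
Let `R = F₂[t₁, …, tₘ] ⧸ Jₘ`. The relation `tᵢ² tⱼ = tᵢ tⱼ²` lets one move exponent between the
variables of a monomial, so the class of `t^d` in `R` depends only on the support and the total
degree of `d`. Such classes are detected by the substitutions `tᵢ ↦ [i ∈ B] X` into `F₂[X]`, one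
for each `B ⊆ {1, …, m}` (Möbius inversion over the subsets of `B`), so a polynomial lies in `Jₘ`
as soon as all these substitutions kill it. The substitution sends `e_n` to `C(|B|, n) Xⁿ`, and a
product of such terms to `(∏ C(|B|, nₐ)) X^(∑ nₐ)`; since every element of `F₂` is idempotent, the
product of binomial coefficients only depends on the set of the `nₐ`.
-/

namespace Finsupp

variable {σ : Type*}

lemma eq_of_le_of_degree_eq {d d' : σ →₀ ℕ} (hle : d ≤ d') (hdeg : d.degree = d'.degree) :
    d = d' := by
  obtain ⟨e, rfl⟩ := le_iff_exists_add.mp hle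
  rw [map_add, left_eq_add, degree_eq_zero_iff] at hdeg
  rw [hdeg, add_zero]

lemma eq_of_support_eq_of_degree_eq {d d' : σ →₀ ℕ} (hs : d.support = d'.support)
    (hdeg : d.degree = d'.degree) (hd : ∀ i, d i ≤ 1) : d = d' := by
  refine eq_of_le_of_degree_eq (fun i => ?_) hdeg
  by_cases hi : i ∈ d.support
  · exact (hd i).trans (Nat.one_le_iff_ne_zero.mpr (mem_support_iff.mp (hs ▸ hi)))
  · rw [notMem_support_iff.mp hi]
    exact Nat.zero_le _

lemma exists_eq_add_single_of_two_le {d : σ →₀ ℕ} {i : σ} (hi : 2 ≤ d i) :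
    ∃ d₀ : σ →₀ ℕ, d = d₀ + single i 1 ∧ d₀.support = d.support := by
  classical
  refine ⟨d - single i 1, (tsub_add_cancel_of_le ?_).symm, ?_⟩
  · intro k
    rw [single_apply]
    split_ifs with h <;> [subst h; skip] <;> omega
  · ext k
    simp only [mem_support_iff, tsub_apply, single_apply]
    split_ifs with h <;> [subst h; skip] <;> omega

end Finsupp

lemma Finset.eq_zero_of_forall_sum_powerset_eq_zero {α M : Type*} [AddCommMonoid M]
    {c : Finset α → M} (h : ∀ B : Finset α, ∑ U ∈ B.powerset, c U = 0) (U : Finset α) :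
    c U = 0 := by
  induction U using Finset.strongInduction with
  | H U ih =>
  rw [← h U, Finset.sum_eq_single_of_mem U (Finset.mem_powerset_self U)]
  intro V hV hVU
  exact ih V ((Finset.mem_powerset.mp hV).ssubset_of_ne hVU)

lemma Finset.prod_comp_of_isIdempotentElem {ι κ M : Type*} [CommMonoid M] [DecidableEq κ]
    (s : Finset ι) (g : ι → κ) {f : κ → M} (hf : ∀ k, IsIdempotentElem (f k)) :
    ∏ a ∈ s, f (g a) = ∏ b ∈ s.image g, f b := by
  rw [Finset.prod_comp]
  refine Finset.prod_congr rfl fun b hb => ?_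
  obtain ⟨a, ha, rfl⟩ := Finset.mem_image.mp hb
  obtain ⟨n, hn⟩ := Nat.exists_eq_add_one.mpr
    ((Finset.card_pos (s := {x ∈ s | g x = g a})).mpr ⟨a, Finset.mem_filter.mpr ⟨ha, rfl⟩⟩)
  rw [hn, (hf _).pow_succ_eq]

section Evaluation

variable {σ R : Type*} [CommSemiring R] [DecidableEq σ]

noncomputable def aevalIndicator (B : Finset σ) : MvPolynomial σ R →ₐ[R] Polynomial R :=
  aeval fun i => if i ∈ B then Polynomial.X else 0

lemma aevalIndicator_monomial (B : Finset σ) (d : σ →₀ ℕ) (r : R) :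
    aevalIndicator B (monomial d r) =
      if d.support ⊆ B then Polynomial.C r * Polynomial.X ^ d.degree else 0 := by
  rw [aevalIndicator, aeval_monomial, Finsupp.prod, Polynomial.algebraMap_eq]
  have : ∀ i ∈ d.support, (if i ∈ B then (Polynomial.X : Polynomial R) else 0) ^ d i =
      if i ∈ B then Polynomial.X ^ d i else 0 := fun i hi => by
    rw [ite_pow, zero_pow (Finsupp.mem_support_iff.mp hi)]
  rw [Finset.prod_congr rfl this, Finset.prod_ite_zero, Finset.prod_pow_eq_pow_sum,
    ← Finsupp.degree_apply]
  simp only [Finset.subset_iff, mul_ite, mul_zero]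

lemma coeff_aevalIndicator (B : Finset σ) (f : MvPolynomial σ R) (N : ℕ) :
    (aevalIndicator B f).coeff N =
      ∑ U ∈ B.powerset, ∑ d ∈ f.support with (d.support, d.degree) = (U, N), coeff d f := by
  conv_lhs => rw [f.as_sum]
  simp only [map_sum, aevalIndicator_monomial, Polynomial.finsetSum_coeff, Finset.sum_filter]
  rw [Finset.sum_comm]
  refine Finset.sum_congr rfl fun d _ => ?_
  simp only [Prod.mk.injEq, ite_and, Finset.sum_ite_eq, Finset.mem_powerset]
  split_ifs <;> simp_all [eq_comm]

lemma sum_fiber_eq_zero_of_forall_aevalIndicator_eq_zero {f : MvPolynomial σ R}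
    (h : ∀ B : Finset σ, aevalIndicator B f = 0) (U : Finset σ) (N : ℕ) :
    ∑ d ∈ f.support with (d.support, d.degree) = (U, N), coeff d f = 0 :=
  Finset.eq_zero_of_forall_sum_powerset_eq_zero
    (c := fun U => ∑ d ∈ f.support with (d.support, d.degree) = (U, N), coeff d f)
    (fun B => by rw [← coeff_aevalIndicator, h, Polynomial.coeff_zero]) U

lemma aevalIndicator_esymm [Fintype σ] (B : Finset σ) (n : ℕ) :
    aevalIndicator B (esymm σ R n) = Polynomial.C (B.card.choose n : R) * Polynomial.X ^ n := by
  have hB : {t ∈ Finset.powersetCard n (Finset.univ : Finset σ) | ∀ i ∈ t, i ∈ B} =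
      B.powersetCard n := by
    ext t; simp [Finset.mem_powersetCard, Finset.subset_iff, and_comm]
  simp only [esymm, aevalIndicator, map_sum, map_prod, aeval_X, Finset.prod_ite_zero,
    Finset.prod_const]
  rw [Finset.sum_congr rfl fun t ht => by rw [(Finset.mem_powersetCard.mp ht).2],
    ← Finset.sum_filter]
  simp [hB]

end Evaluation

section Quotient

variable {m : ℕ}

local notation "π" => Ideal.Quotient.mk (J m)

lemma mk_X_sq_mul_X (i j : Fin m) : π (X i ^ 2 * X j) = π (X i * X j ^ 2) := by
  rw [Ideal.Quotient.eq, CharTwo.sub_eq_add]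
  exact Ideal.subset_span ⟨i, j, rfl⟩

lemma mk_monomial_mul_X_eq {d : Fin m →₀ ℕ} {i j : Fin m} (hi : i ∈ d.support)
    (hj : j ∈ d.support) : π (monomial d 1 * X i) = π (monomial d 1 * X j) := by
  obtain rfl | hij := eq_or_ne i j
  · rfl
  obtain ⟨d₀, rfl⟩ : ∃ d₀, d = d₀ + Finsupp.single i 1 + Finsupp.single j 1 := by
    simp_rw [add_assoc]
    refine ⟨_, (tsub_add_cancel_of_le fun k => ?_).symm⟩
    rw [Finsupp.mem_support_iff] at hi hj
    simp only [Finsupp.add_apply, Finsupp.single_apply]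
    by_cases hik : i = k <;> by_cases hjk : j = k <;> simp only [hik, hjk, if_true, if_false] <;>
      grind
  simp only [monomial_add_single, pow_one]
  calc π (monomial d₀ 1 * X i * X j * X i) = π (monomial d₀ 1) * π (X i ^ 2 * X j) := by
        rw [← map_mul]; ring_nf
    _ = π (monomial d₀ 1 * X i * X j * X j) := by
        rw [mk_X_sq_mul_X, ← map_mul]; ring_nf

theorem mk_monomial_eq_of_support_eq_of_degree_eq {d d' : Fin m →₀ ℕ}
    (hs : d.support = d'.support) (hdeg : d.degree = d'.degree) :
    π (monomial d 1) = π (monomial d' 1) := by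
  induction hN : d.degree using Nat.strong_induction_on generalizing d d' with
  | _ N ih =>
  -- Peel one variable of exponent `≥ 2` off each side; if one side has none, it is the
  -- indicator of the common support, and then the degrees force `d = d'`.
  by_cases h : (∃ i, 2 ≤ d i) ∧ ∃ i, 2 ≤ d' i
  · obtain ⟨⟨i, hi⟩, ⟨i', hi'⟩⟩ := h
    obtain ⟨d₀, rfl, hd₀⟩ := Finsupp.exists_eq_add_single_of_two_le hi
    obtain ⟨d₀', rfl, hd₀'⟩ := Finsupp.exists_eq_add_single_of_two_le hi'
    simp only [map_add, Finsupp.degree_single] at hdeg hN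
    have hi₀ : i ∈ d₀'.support := by
      rw [hd₀', ← hs, Finsupp.mem_support_iff]; omega
    have hi₀' : i' ∈ d₀'.support := by
      rw [hd₀', Finsupp.mem_support_iff]; omega
    simp only [monomial_add_single, pow_one]
    rw [map_mul, ih _ (by omega) (hd₀.trans (hs.trans hd₀'.symm)) (by omega) rfl, ← map_mul,
      mk_monomial_mul_X_eq hi₀ hi₀']
  · rcases not_and_or.mp h with h | h <;> push Not at h
    · rw [Finsupp.eq_of_support_eq_of_degree_eq hs hdeg fun i => Nat.le_of_lt_succ (h i)]
    · rw [Finsupp.eq_of_support_eq_of_degree_eq hs.symm hdeg.symm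
        fun i => Nat.le_of_lt_succ (h i)]

theorem mem_J_of_sum_fiber_eq_zero {f : MvPolynomial (Fin m) (ZMod 2)}
    (h : ∀ U N, ∑ d ∈ f.support with (d.support, d.degree) = (U, N), coeff d f = 0) :
    f ∈ J m := by
  let φ : (Fin m →₀ ℕ) → Finset (Fin m) × ℕ := fun d => (d.support, d.degree)
  let G := Function.extend φ (fun d => π (monomial d 1)) 0
  have hG (d : Fin m →₀ ℕ) : G (φ d) = π (monomial d 1) :=
    Function.FactorsThrough.extend_apply (fun _ _ h =>
      mk_monomial_eq_of_support_eq_of_degree_eq (Prod.ext_iff.mp h).1 (Prod.ext_iff.mp h).2) 0 d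
  rw [← Ideal.Quotient.eq_zero_iff_mem, f.as_sum, map_sum]
  calc ∑ d ∈ f.support, π (monomial d (coeff d f))
      = ∑ d ∈ f.support, π (C (coeff d f)) * G (φ d) := by
        refine Finset.sum_congr rfl fun d _ => ?_
        rw [hG, ← map_mul, C_mul_monomial, mul_one]
    _ = ∑ p ∈ f.support.image φ, π (C (∑ d ∈ f.support with φ d = p, coeff d f)) * G p := by
        rw [← Finset.sum_fiberwise_of_maps_to fun d hd => Finset.mem_image_of_mem φ hd]
        refine Finset.sum_congr rfl fun p _ => ?_
        rw [map_sum, map_sum, Finset.sum_mul]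
        exact Finset.sum_congr rfl fun d hd => by rw [(Finset.mem_filter.mp hd).2]
    _ = 0 := Finset.sum_eq_zero fun p _ => by rw [h p.1 p.2, map_zero, map_zero, zero_mul]

theorem sub_mem_J_of_forall_aevalIndicator_eq {f g : MvPolynomial (Fin m) (ZMod 2)}
    (h : ∀ B, aevalIndicator B f = aevalIndicator B g) : f - g ∈ J m :=
  mem_J_of_sum_fiber_eq_zero <|
    sum_fiber_eq_zero_of_forall_aevalIndicator_eq_zero fun B => by rw [map_sub, h, sub_self]

lemma aevalIndicator_prod_esymm {ι : Type*} (B : Finset (Fin m)) (s : Finset ι) (n : ι → ℕ) :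
    aevalIndicator B (∏ a ∈ s, esymm (Fin m) (ZMod 2) (n a)) =
      Polynomial.C (∏ k ∈ s.image n, (B.card.choose k : ZMod 2)) *
        Polynomial.X ^ ∑ a ∈ s, n a := by
  have hidem (x : ZMod 2) : IsIdempotentElem x := (sq x).symm.trans (ZMod.pow_card x)
  rw [map_prod, ← s.prod_comp_of_isIdempotentElem n fun _ => hidem _, map_prod,
    ← Finset.prod_pow_eq_pow_sum, ← Finset.prod_mul_distrib]
  exact Finset.prod_congr rfl fun a _ => aevalIndicator_esymm B (n a)

theorem prod_esymm_sub_prod_esymm_mem_J {ι κ : Type*} [Fintype ι] [Fintype κ] (p : ι → ℕ)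
    (q : κ → ℕ)
    (hsum : ∑ a, p a = ∑ b, q b) (hrange : Set.range p = Set.range q) :
    (∏ a, esymm (Fin m) (ZMod 2) (p a)) - ∏ b, esymm (Fin m) (ZMod 2) (q b) ∈ J m := by
  have himage : Finset.univ.image p = Finset.univ.image q :=
    Finset.coe_injective (by simpa only [Finset.coe_image, Finset.coe_univ, Set.image_univ])
  refine sub_mem_J_of_forall_aevalIndicator_eq fun B => ?_
  rw [aevalIndicator_prod_esymm, aevalIndicator_prod_esymm, himage, hsum]

end Quotient

theorem stmt_17_general (m : ℕ) (s t : ℕ) (j : Fin s → ℕ) (k : Fin t → ℕ)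
    (hsum : (∑ a, 2 ^ j a) = ∑ b, 2 ^ k b)
    (hset : Set.range (fun a => 2 ^ j a) = Set.range (fun b => 2 ^ k b)) :
    (∏ a, esymm (Fin m) (ZMod 2) (2 ^ j a)) - ∏ b, esymm (Fin m) (ZMod 2) (2 ^ k b)
      ∈ J m :=
  prod_esymm_sub_prod_esymm_mem_J _ _ hsum hset

/-- Let `2^(j 1), …, 2^(j s)` and `2^(k 1), …, 2^(k t)` be two lists of powers of `2`, each at
most `m`, having the same sum and the same underlying set of values.  Then
`e (2^(j 1)) ⋯ e (2^(j s)) - e (2^(k 1)) ⋯ e (2^(k t))` lies in the ideal `J m`, where `e d`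
denotes the `d`-th elementary symmetric polynomial in `F₂[t 1, …, t m]`. -/
theorem stmt_17 (m : ℕ) (hm : 1 ≤ m) (s t : ℕ) (j : Fin s → ℕ) (k : Fin t → ℕ)
    (hjm : ∀ a, 2 ^ j a ≤ m) (hkm : ∀ b, 2 ^ k b ≤ m)
    (hsum : (∑ a, 2 ^ j a) = ∑ b, 2 ^ k b)
    (hset : Set.range (fun a => 2 ^ j a) = Set.range (fun b => 2 ^ k b)) :
    (∏ a, esymm (Fin m) (ZMod 2) (2 ^ j a)) - ∏ b, esymm (Fin m) (ZMod 2) (2 ^ k b)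
      ∈ J m :=
  stmt_17_general m s t j k hsum hset
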